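/- Let T be a bounded injective linear operator on a complex Banach space X such that (i) the intersection over all n ∈ ℕ of the closures of Tⁿ(X) equals {0}, and (ii) there exists n ∈ ℕ such that the closure of T^{n+1}(X) has finite codimension in the closure of Tⁿ(X). Then T determines the topology of X: every complete norm on X with respect to which T is bounded is equivalent to the original norm of X. -/

import Mathlib

/-- `N` is a complete norm on the complex vector space `X`: it satisfies the norm axioms
and every `N`-Cauchy sequence `N`-converges. -/
structure IsCompleteNorm {X : Type*} [AddCommGroup X] [Module ℂ X] (N : X → ℝ) : Prop where
  eq_zero_of_map_eq_zero : ∀ x : X, N x = 0 → x = 0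
  map_smul : ∀ (c : ℂ) (x : X), N (c • x) = ‖c‖ * N x
  add_le : ∀ x y : X, N (x + y) ≤ N x + N y
  complete : ∀ u : ℕ → X,
    (∀ ε : ℝ, 0 < ε → ∃ n₀ : ℕ, ∀ m ≥ n₀, ∀ n ≥ n₀, N (u m - u n) < ε) →
    ∃ x : X, Filter.Tendsto (fun n => N (u n - x)) Filter.atTop (nhds 0)

/-!
Let `f : (X, N) → (X, ‖·‖)` be the identity and `S` its separating space, the set of limits of
`f uₙ` with `uₙ → 0` for `N`. By the closed graph theorem `f` is continuous as soon as `S = 0`, and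
the open mapping theorem then makes the two norms equivalent.

Since `T` is bounded for both norms, Sinclair's stability lemma gives an `m` with
`Tᵐ S ⊆ closure (Tᵐ⁺¹ S)`: otherwise the maps `ξ ↦ Tᵐ ξ` modulo `closure (Tᵐ⁺¹ S)` would all be
discontinuous while their composites with `T` are continuous, and a gliding hump series
`∑ Tⁱ x (i + m)` built from tiny `x m` with huge images gives a contradiction. Iterating,
`Tᵐ S` lies in `closure (Tⁿ X)` for every `n`, so `Tᵐ S = 0`, and `S = 0` because `T` is injective.
-/

open Filter Topology Set

theorem exists_seq_of_forall_exists_sum {α M : Type*} [AddCommMonoid M] (g : ℕ → α → M)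
    {P : ℕ → M → α → Prop} (h : ∀ m s, ∃ a, P m s a) :
    ∃ x : ℕ → α, ∀ m, P m (∑ k ∈ Finset.range m, g k (x k)) (x m) := by
  choose next hnext using h
  let s : ℕ → M := fun n => Nat.rec 0 (fun m sm => sm + g m (next m sm)) n
  have hs : ∀ m, s m = ∑ k ∈ Finset.range m, g k (next k (s k)) := by
    intro m
    induction m with
    | zero => rfl
    | succ m ih => rw [Finset.sum_range_succ, ← ih]
  exact ⟨fun m => next m (s m), fun m => hs m ▸ hnext m (s m)⟩

theorem subset_closure_image_iterate {X : Type*} [TopologicalSpace X] {g : X → X}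
    (hg : Continuous g) {s : Set X} (hs : s ⊆ closure (g '' s)) (n : ℕ) :
    s ⊆ closure (g^[n] '' s) := by
  induction n with
  | zero => simpa using subset_closure
  | succ n ih =>
    calc s ⊆ closure (g '' s) := hs
      _ ⊆ closure (g '' closure (g^[n] '' s)) := closure_mono (image_mono ih)
      _ ⊆ closure (closure (g '' (g^[n] '' s))) :=
        closure_mono (image_closure_subset_closure_image hg)
      _ = closure (g^[n + 1] '' s) := by
        rw [closure_closure, ← image_comp, ← Function.iterate_succ']

theorem Module.End.pow_apply_eq_sub_sum {R E : Type*} [Semiring R] [AddCommGroup E] [Module R E]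
    {T : Module.End R E} {x ζ : ℕ → E} (hζ : ∀ m, ζ m = x m + T (ζ (m + 1))) (m : ℕ) :
    (T ^ m) (ζ m) = ζ 0 - ∑ k ∈ Finset.range m, (T ^ k) (x k) := by
  induction m with
  | zero => simp
  | succ m ih =>
    rw [Finset.sum_range_succ, ← sub_sub, ← ih, hζ m, pow_succ, Module.End.mul_apply, map_add]
    abel

section Normed

variable {𝕜 E F G : Type*} [NontriviallyNormedField 𝕜] [NormedAddCommGroup E] [NormedSpace 𝕜 E]
  [NormedAddCommGroup F] [NormedSpace 𝕜 F]

theorem ContinuousLinearMap.exists_eq_add_apply_succ [CompleteSpace E] (T : E →L[𝕜] E)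
    {x : ℕ → E} {c : ℕ → ℝ} (hx : ∀ i m, ‖(T ^ i) (x (i + m))‖ ≤ c m / 2 / 2 ^ i) :
    ∃ ζ : ℕ → E, (∀ m, ζ m = x m + T (ζ (m + 1))) ∧ ∀ m, ‖ζ m‖ ≤ c m := by
  have hsum : ∀ m, Summable fun i => (T ^ i) (x (i + m)) := fun m =>
    (summable_geometric_two' (c m)).of_norm_bounded (hx · m)
  refine ⟨fun m => ∑' i, (T ^ i) (x (i + m)), fun m => ?_, fun m =>
    tsum_of_norm_bounded (hasSum_geometric_two' (c m)) (hx · m)⟩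
  dsimp only
  rw [(hsum m).tsum_eq_zero_add, T.map_tsum (hsum (m + 1))]
  congr 1
  · simp
  · refine tsum_congr fun i => ?_
    rw [pow_succ', mul_apply_eq_comp, add_right_comm, add_assoc]

theorem LinearMap.frequently_le_norm_of_not_continuous {Q : Type*} [NormedAddCommGroup Q]
    [NormedSpace 𝕜 Q] (φ : E →ₗ[𝕜] Q) (hφ : ¬Continuous φ) (R : ℝ) :
    ∃ᶠ a in 𝓝 (0 : E), R ≤ ‖φ a‖ := by
  contrapose! hφ
  obtain ⟨r, hr, hball⟩ := Metric.eventually_nhds_iff_ball.1 hφ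
  obtain ⟨C, hC⟩ := φ.bound_of_ball_bound hr R fun z hz => (hball z hz).le
  exact AddMonoidHomClass.continuous_of_bound φ C hC

theorem LinearMap.exists_gliding_hump_seq (T : E →L[𝕜] E) (f : E →ₗ[𝕜] F)
    {Q : ℕ → Type*} [∀ m, NormedAddCommGroup (Q m)] [∀ m, NormedSpace 𝕜 (Q m)]
    (π : ∀ m, F →ₗ[𝕜] Q m) (hdisc : ∀ m, ¬Continuous (π m ∘ₗ f ∘ₗ (T ^ m : E →L[𝕜] E).toLinearMap))
    {δ : ℕ → ℝ} (hδ : ∀ m, 0 < δ m) :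
    ∃ x : ℕ → E, (∀ i m, ‖(T ^ i) (x (i + m))‖ ≤ δ m / 2 / 2 ^ i) ∧
      ∀ m, m + ‖∑ k ∈ Finset.range m, f ((T ^ k) (x k))‖ ≤ ‖π m (f ((T ^ m) (x m)))‖ := by
  have hstep : ∀ (m : ℕ) (s : F), ∃ a : E,
      (∀ i ≤ m, ‖(T ^ i) a‖ ≤ δ (m - i) / 2 / 2 ^ i) ∧ m + ‖s‖ ≤ ‖π m (f ((T ^ m) a))‖ := by
    intro m s
    have hsmall : ∀ᶠ a in 𝓝 (0 : E), ∀ i ∈ Iic m, ‖(T ^ i) a‖ < δ (m - i) / 2 / 2 ^ i :=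
      (eventually_all_finite (finite_Iic m)).2 fun i _ =>
        ((T ^ i).continuous.norm.tendsto' 0 0 (by simp)).eventually_lt_const
          (by have := hδ (m - i); positivity)
    obtain ⟨a, hlarge, ha⟩ :=
      ((frequently_le_norm_of_not_continuous _ (hdisc m) (m + ‖s‖)).and_eventually hsmall).exists
    exact ⟨a, fun i hi => (ha i hi).le, hlarge⟩
  obtain ⟨x, hx⟩ := exists_seq_of_forall_exists_sum (fun k a => f ((T ^ k) a)) hstep
  exact ⟨x, fun i m => by simpa using (hx (i + m)).1 i (by omega), fun m => (hx m).2⟩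

theorem LinearMap.exists_continuous_comp_pow [CompleteSpace E] (T : E →L[𝕜] E) (f : E →ₗ[𝕜] F)
    {Q : ℕ → Type*} [∀ m, NormedAddCommGroup (Q m)] [∀ m, NormedSpace 𝕜 (Q m)]
    (π : ∀ m, F →ₗ[𝕜] Q m) (hπ : ∀ m y, ‖π m y‖ ≤ ‖y‖)
    (hcont : ∀ m, Continuous (π m ∘ₗ f ∘ₗ (T ^ (m + 1) : E →L[𝕜] E).toLinearMap)) :
    ∃ m, Continuous (π m ∘ₗ f ∘ₗ (T ^ m : E →L[𝕜] E).toLinearMap) := by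
  by_contra! hdisc
  let ψ : ∀ m, E →L[𝕜] Q m := fun m => ⟨_, hcont m⟩
  -- `ψ m` is applied to `ζ (m + 1)`, hence the shift; the value at `0` is never used
  let δ : ℕ → ℝ := fun n => (‖ψ (n - 1)‖ + 1)⁻¹
  obtain ⟨x, hxδ, hx⟩ := exists_gliding_hump_seq T f π hdisc (δ := δ) fun n => by positivity
  obtain ⟨ζ, hζ, hζδ⟩ := T.exists_eq_add_apply_succ hxδ
  obtain ⟨m, hm⟩ := exists_nat_ge (‖f (ζ 0)‖ + 1)
  set s := ∑ k ∈ Finset.range m, f ((T ^ k) (x k))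
  have htel := Module.End.pow_apply_eq_sub_sum (T := (T : E →ₗ[𝕜] E)) hζ m
  simp only [← ContinuousLinearMap.toLinearMap_pow, ContinuousLinearMap.coe_coe] at htel
  have hxm : (T ^ m) (x m) = (T ^ m) (ζ m) - (T ^ (m + 1)) (ζ (m + 1)) := by
    rw [hζ m, map_add, pow_succ, mul_apply_eq_comp, add_sub_cancel_right]
  have hdecomp : π m (f ((T ^ m) (x m))) = π m (f (ζ 0) - s) - ψ m (ζ (m + 1)) := by
    rw [hxm, map_sub, map_sub, htel, map_sub, map_sum]
    rfl
  have hψ : ‖ψ m (ζ (m + 1))‖ < 1 := by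
    refine ((ψ m).le_opNorm_of_le (hζδ (m + 1))).trans_lt ?_
    rw [show δ (m + 1) = (‖ψ m‖ + 1)⁻¹ by simp [δ], ← div_eq_mul_inv, div_lt_one (by positivity)]
    linarith
  refine (hx m).not_gt ?_
  calc ‖π m (f ((T ^ m) (x m)))‖ ≤ ‖f (ζ 0) - s‖ + ‖ψ m (ζ (m + 1))‖ := by
        rw [hdecomp]; exact (norm_sub_le _ _).trans (add_le_add (hπ _ _) le_rfl)
    _ < ‖f (ζ 0)‖ + ‖s‖ + 1 := by linarith [norm_sub_le (f (ζ 0)) s]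
    _ ≤ m + ‖s‖ := by linarith

namespace LinearMap

def separatingSpace (f : E →ₗ[𝕜] F) : Submodule 𝕜 F :=
  f.graph.topologicalClosure.comap (LinearMap.inr 𝕜 E F)

variable (f : E →ₗ[𝕜] F)

theorem isClosed_separatingSpace : IsClosed (f.separatingSpace : Set F) :=
  f.graph.isClosed_topologicalClosure.preimage (ContinuousLinearMap.inr 𝕜 E F).continuous

theorem mem_closure_graph_iff {p : E × F} :
    p ∈ closure (f.graph : Set (E × F)) ↔ p.2 - f p.1 ∈ f.separatingSpace := by
  have hgraph : (p.1, f p.1) ∈ f.graph.topologicalClosure :=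
    f.graph.le_topologicalClosure ((f.mem_graph_iff _).2 rfl)
  have hp : (0, p.2 - f p.1) + (p.1, f p.1) = p := by ext <;> simp
  rw [← Submodule.topologicalClosure_coe, SetLike.mem_coe]
  conv_lhs => rw [← hp]
  exact Submodule.add_mem_iff_left _ hgraph

theorem continuous_of_separatingSpace_eq_bot [CompleteSpace E] [CompleteSpace F]
    (h : f.separatingSpace = ⊥) : Continuous f := by
  refine f.continuous_of_isClosed_graph (isClosed_of_closure_subset fun p hp => ?_)
  rw [mem_closure_graph_iff, h, Submodule.mem_bot, sub_eq_zero] at hp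
  exact (f.mem_graph_iff p).2 hp

theorem separatingSpace_le_ker [AddCommGroup G] [Module 𝕜 G] [TopologicalSpace G]
    [ContinuousSub G] [T2Space G] (h : F →L[𝕜] G) (hf : Continuous (h ∘ f)) :
    f.separatingSpace ≤ ker (h : F →ₗ[𝕜] G) := by
  intro y hy
  have hclosed : IsClosed {p : E × F | h p.2 - h (f p.1) = 0} :=
    isClosed_eq ((h.continuous.comp continuous_snd).sub (hf.comp continuous_fst)) continuous_const
  have hgraph : (f.graph : Set (E × F)) ⊆ {p | h p.2 - h (f p.1) = 0} := fun p hp => by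
    rw [mem_ofPred_eq, ← (f.mem_graph_iff p).1 hp, sub_self]
  simpa using hclosed.closure_subset_iff.2 hgraph hy

theorem continuous_mkQ_comp [CompleteSpace E] [CompleteSpace F] :
    Continuous (f.separatingSpace.mkQ ∘ₗ f) := by
  set S := f.separatingSpace
  have : IsClosed (S : Set F) := f.isClosed_separatingSpace
  have hq : IsQuotientMap (Prod.map _root_.id S.mkQ : E × F → E × (F ⧸ S)) :=
    (IsOpenMap.prodMap (f := (_root_.id : E → E)) IsOpenMap.id S.isOpenMap_mkQ).isQuotientMap
      (continuous_id.prodMap S.isQuotientMap_mkQ.continuous)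
      (Function.surjective_id.prodMap S.mkQ_surjective)
  have hpre : Prod.map _root_.id S.mkQ ⁻¹' ((S.mkQ ∘ₗ f).graph : Set (E × (F ⧸ S))) =
      closure (f.graph : Set (E × F)) := by
    ext p
    simp [mem_closure_graph_iff, mem_graph_iff, Submodule.Quotient.eq, S]
  refine (S.mkQ ∘ₗ f).continuous_of_isClosed_graph ?_
  rw [← hq.isCoinducing.isClosed_preimage, hpre]
  exact isClosed_closure

theorem continuous_comp_of_separatingSpace_le_ker [CompleteSpace E] [CompleteSpace F]
    [AddCommGroup G] [Module 𝕜 G] [TopologicalSpace G] (h : F →L[𝕜] G)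
    (hS : f.separatingSpace ≤ ker (h : F →ₗ[𝕜] G)) : Continuous (h ∘ f) := by
  have hlift : Continuous (f.separatingSpace.liftQ (h : F →ₗ[𝕜] G) hS) :=
    f.separatingSpace.isQuotientMap_mkQ.continuous_iff.2 h.continuous
  exact hlift.comp f.continuous_mkQ_comp

theorem separatingSpace_eq_bot_of_injective [CompleteSpace E] [CompleteSpace F]
    (TE : E →L[𝕜] E) (TF : F →L[𝕜] F) (hcomm : ∀ x, f (TE x) = TF (f x))
    (hinj : Function.Injective TF) (hcap : ⋂ n, closure (Set.range (⇑TF)^[n]) = {0}) :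
    f.separatingSpace = ⊥ := by
  set S := f.separatingSpace
  let K : ℕ → Submodule 𝕜 F := fun n => (S.map (TF ^ n).toLinearMap).topologicalClosure
  -- makes the quotients `F ⧸ K n` normed
  have hK : ∀ n, IsClosed (K n : Set F) := fun n => Submodule.isClosed_topologicalClosure _
  have hcomm_pow : ∀ n x, f ((TE ^ n) x) = (TF ^ n) (f x) := by
    intro n
    induction n with
    | zero => simp
    | succ n ih =>
      intro x
      rw [pow_succ, mul_apply_eq_comp, ih, hcomm, pow_succ, mul_apply_eq_comp]
  have hcomp : ∀ m n, (K m).mkQ ∘ₗ f ∘ₗ (TE ^ n).toLinearMap = ((K m).mkQL ∘L TF ^ n) ∘ f := by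
    intro m n
    funext x
    exact congrArg (K m).mkQ (hcomm_pow n x)
  obtain ⟨m, hm⟩ := exists_continuous_comp_pow TE f (fun m => (K (m + 1)).mkQ)
    (fun m y => Submodule.Quotient.norm_mk_le _ y) fun m => by
      rw [hcomp]
      refine f.continuous_comp_of_separatingSpace_le_ker _ fun y hy => ?_
      exact LinearMap.mem_ker.2 <| (Submodule.Quotient.mk_eq_zero _).2 <|
        Submodule.le_topologicalClosure _ (Submodule.mem_map_of_mem hy)
  have hW : (TF ^ m) '' S ⊆ closure (TF '' ((TF ^ m) '' S)) := by
    rintro _ ⟨y, hy, rfl⟩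
    have hker := f.separatingSpace_le_ker ((K (m + 1)).mkQL ∘L TF ^ m) (hcomp _ _ ▸ hm) hy
    have hKcoe : (K (m + 1) : Set F) = closure (TF '' ((TF ^ m) '' S)) := by
      rw [Submodule.topologicalClosure_coe, Submodule.map_coe, ← image_comp, pow_succ',
        ContinuousLinearMap.coe_coe, FunLike.coe_mul_eq_comp]
    exact hKcoe ▸ (Submodule.Quotient.mk_eq_zero _).1 (LinearMap.mem_ker.1 hker)
  have hzero : (TF ^ m) '' S ⊆ {0} := hcap ▸ subset_iInter fun n =>
    (subset_closure_image_iterate TF.continuous hW n).trans (closure_mono (image_subset_range _ _))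
  rw [eq_bot_iff]
  intro y hy
  have : (TF ^ m) y = (TF ^ m) 0 := by simpa using hzero ⟨y, hy, rfl⟩
  rw [FunLike.coe_pow_eq_iterate] at this
  exact hinj.iterate m this

end LinearMap

theorem LinearEquiv.exists_pos_bounds_of_continuous [CompleteSpace E] [CompleteSpace F]
    (e : E ≃ₗ[𝕜] F) (he : Continuous e) :
    ∃ c C : ℝ, 0 < c ∧ 0 < C ∧ ∀ x, c * ‖e x‖ ≤ ‖x‖ ∧ ‖x‖ ≤ C * ‖e x‖ := by
  let e' := e.toContinuousLinearEquivOfContinuous he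
  obtain ⟨C₁, hC₁, h₁⟩ := (e' : E →L[𝕜] F).bound
  obtain ⟨C₂, hC₂, h₂⟩ := (e'.symm : F →L[𝕜] E).bound
  refine ⟨C₁⁻¹, C₂, inv_pos.2 hC₁, hC₂, fun x => ⟨?_, ?_⟩⟩
  · rw [inv_mul_le_iff₀ hC₁]
    exact h₁ x
  · calc ‖x‖ = ‖(e'.symm : F →L[𝕜] E) (e x)‖ := by simp [e']
      _ ≤ C₂ * ‖e x‖ := h₂ (e x)

end Normed

namespace IsCompleteNorm

variable {X : Type*} [AddCommGroup X] [Module ℂ X] {N : X → ℝ}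

protected theorem map_zero (hN : IsCompleteNorm N) : N 0 = 0 := by
  simpa using hN.map_smul 0 0

protected theorem map_neg (hN : IsCompleteNorm N) (x : X) : N (-x) = N x := by
  simpa using hN.map_smul (-1) x

/-- A copy of `X`; indexing it by the proof `hN` lets the instances below give it the norm `N`. -/
def Renormed (_ : IsCompleteNorm N) : Type _ := X

variable (hN : IsCompleteNorm N)

instance : AddCommGroup hN.Renormed := inferInstanceAs (AddCommGroup X)

instance : Module ℂ hN.Renormed := inferInstanceAs (Module ℂ X)

instance : NormedAddCommGroup hN.Renormed := AddGroupNorm.toNormedAddCommGroup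
  { toFun := N
    map_zero' := hN.map_zero
    add_le' := hN.add_le
    neg' := hN.map_neg
    eq_zero_of_map_eq_zero' := hN.eq_zero_of_map_eq_zero }

instance : NormedSpace ℂ hN.Renormed := ⟨fun c x => (hN.map_smul c x).le⟩

def toRenormed : X ≃ₗ[ℂ] hN.Renormed := LinearEquiv.refl ℂ X

instance : CompleteSpace hN.Renormed := by
  refine Metric.complete_of_cauchySeq_tendsto fun u hu => ?_
  obtain ⟨x, hx⟩ := hN.complete (hN.toRenormed.symm ∘ u) fun ε hε => by
    obtain ⟨n₀, h⟩ := Metric.cauchySeq_iff.1 hu ε hε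
    exact ⟨n₀, fun m hm n hn => (dist_eq_norm (u m) (u n)).symm.trans_lt (h m hm n hn)⟩
  exact ⟨hN.toRenormed x, tendsto_iff_norm_sub_tendsto_zero.2 hx⟩

end IsCompleteNorm

theorem determines_topology_of_finite_codimension_general
    {X : Type*} [NormedAddCommGroup X] [NormedSpace ℂ X] [CompleteSpace X]
    (T : X →ₗ[ℂ] X) (hT : Continuous T) (hinj : Function.Injective T)
    (hcap : (⋂ n : ℕ, closure ((LinearMap.range (T ^ n) : Submodule ℂ X) : Set X)) = {0}) :
    ∀ N : X → ℝ, IsCompleteNorm N → (∃ C : ℝ, ∀ x : X, N (T x) ≤ C * N x) →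
      ∃ c C : ℝ, 0 < c ∧ 0 < C ∧ ∀ x : X, c * ‖x‖ ≤ N x ∧ N x ≤ C * ‖x‖ := by
  intro N hN hbound
  let e := hN.toRenormed
  let TE : hN.Renormed →L[ℂ] hN.Renormed := (e.conj T).mkContinuousOfExistsBound hbound
  let TF : X →L[ℂ] X := ⟨T, hT⟩
  have hcap' : ⋂ n, closure (Set.range (⇑TF)^[n]) = {0} := by
    simpa [LinearMap.coe_range, Module.End.coe_pow, TF] using hcap
  have hf : Continuous e.symm.toLinearMap :=
    e.symm.toLinearMap.continuous_of_separatingSpace_eq_bot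
      (e.symm.toLinearMap.separatingSpace_eq_bot_of_injective TE TF (fun _ => rfl) hinj hcap')
  obtain ⟨c, C, hc, hC, h⟩ := e.symm.exists_pos_bounds_of_continuous hf
  exact ⟨c, C, hc, hC, fun x => h (e x)⟩

/-- Theorem 1.5: if `T` is a bounded injective linear operator on a complex Banach
space `X` such that `⋂ₙ closure(Tⁿ(X)) = {0}` and `closure(Tⁿ⁺¹(X))` has finite
codimension in `closure(Tⁿ(X))` for some `n`, then `T` determines the topology of `X`:
every complete norm on `X` making `T` bounded is equivalent to the original norm. -/
theorem determines_topology_of_finite_codimension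
    {X : Type*} [NormedAddCommGroup X] [NormedSpace ℂ X] [CompleteSpace X]
    (T : X →ₗ[ℂ] X) (hT : Continuous T) (hinj : Function.Injective T)
    (hcap : (⋂ n : ℕ, closure ((LinearMap.range (T ^ n) : Submodule ℂ X) : Set X)) = {0})
    (hcodim : ∃ n : ℕ, FiniteDimensional ℂ
      ((LinearMap.range (T ^ n)).topologicalClosure ⧸
        Submodule.comap ((LinearMap.range (T ^ n)).topologicalClosure).subtype
          (LinearMap.range (T ^ (n + 1))).topologicalClosure)) :
    ∀ N : X → ℝ, IsCompleteNorm N → (∃ C : ℝ, ∀ x : X, N (T x) ≤ C * N x) →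
      ∃ c C : ℝ, 0 < c ∧ 0 < C ∧ ∀ x : X, c * ‖x‖ ≤ N x ∧ N x ≤ C * ‖x‖ :=
  determines_topology_of_finite_codimension_general T hT hinj hcap
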